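/- arXiv:math/0203024 — 2 statements merged into one kernel-verified Lean document; each statement's English description precedes it below -/
import Mathlib

section
/- Let β ∈ (1,2) and let a = (a_n) be the quasi-greedy expansion of 1 in base β. A sequence ε ∈ {0,1}^ℕ is the unique β-representation of some x ∈ ((2-β)/(β-1), 1) if and only if for all n ≥ 0 the shifted sequence σ^n ε is lexicographically strictly between the complemented sequence ā (where ā_k = 1 - a_k) and a itself. -/
/-!
Write `tₙ = π_β(σⁿε)`, so that `β tₙ = εₙ + tₙ₊₁`, and `B = 1/(β-1)`, the largest value of a
binary sequence. The digit `εₙ` can be replaced by `d` without changing the value exactly when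
`β tₙ - d ∈ [0, B]`, because every point of `[0, B]` has a (greedy) expansion. Hence `ε` is the
unique expansion of a point of `(B - 1, 1)` iff every `tₙ` lies in `(B - 1, 1)`; note that
`B - 1 = (2-β)/(β-1)`.

The quasi-greedy expansion satisfies `π_β(σⁿa) ≤ 1` for all `n`, so `a ≼ η` forces `π_β(η) ≥ 1`;
conversely, if every shift of `η` is below `a`, comparing with `a` at the first difference shows
that an excess `π_β(σᵐη) - 1 ≥ 0` reappears, multiplied by at least `β`, further along the
sequence, which is impossible for bounded values. Complementing digits,
`π_β(ε̄) = B - π_β(ε)`, turns the bound `tₙ < 1` into `B - 1 < tₙ`.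
-/

/-- Strict lexicographic order on digit sequences. -/
def LexLt (x y : ℕ → ℕ) : Prop := ∃ n, (∀ k < n, x k = y k) ∧ x n < y n

/-- Non-strict lexicographic order on digit sequences. -/
def LexLe (x y : ℕ → ℕ) : Prop := LexLt x y ∨ x = y

/-- `a` is the quasi-greedy expansion of `1` in base `β ∈ (1,2)`: the lexicographically
largest binary sequence summing to `1` that does not end in `0^∞`. -/
structure IsQuasiGreedyOne (β : ℝ) (a : ℕ → ℕ) : Prop where
  digits : ∀ n, a n ≤ 1
  sum_one : (∑' n : ℕ, (a n : ℝ) / β ^ (n + 1)) = 1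
  not_fin : ∀ N, ∃ n ≥ N, a n ≠ 0
  maximal : ∀ b : ℕ → ℕ, (∀ n, b n ≤ 1) → (∑' n : ℕ, (b n : ℝ) / β ^ (n + 1)) = 1 →
    (∀ N, ∃ n ≥ N, b n ≠ 0) → LexLe b a

open Set Filter Topology

theorem lexLt_iff_toLex_lt {x y : ℕ → ℕ} : LexLt x y ↔ toLex x < toLex y := Iff.rfl

theorem lexLe_iff_toLex_le {x y : ℕ → ℕ} : LexLe x y ↔ toLex x ≤ toLex y := by
  rw [le_iff_lt_or_eq]
  exact Iff.rfl

theorem lexLt_compl {x y : ℕ → ℕ} (hx : ∀ k, x k ≤ 1) (hy : ∀ k, y k ≤ 1)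
    (h : LexLt (fun k => 1 - x k) y) : LexLt (fun k => 1 - y k) x := by
  obtain ⟨n, hpre, hlt⟩ := h
  refine ⟨n, fun k hk => ?_, ?_⟩
  · have := hpre k hk
    have := hx k
    have := hy k
    simp only at *
    omega
  · have := hx n
    have := hy n
    simp only at *
    omega

namespace BetaExpansion

noncomputable def value (β : ℝ) (ε : ℕ → ℕ) : ℝ := ∑' n, (ε n : ℝ) / β ^ (n + 1)

def IsUniqueExpansion (β : ℝ) (ε : ℕ → ℕ) : Prop :=
  ∀ ε' : ℕ → ℕ, (∀ n, ε' n ≤ 1) → value β ε' = value β ε → ε' = ε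

variable {β : ℝ}

theorem hasSum_one_div_pow (hβ : 1 < β) :
    HasSum (fun n : ℕ => 1 / β ^ (n + 1)) (β - 1)⁻¹ := by
  have hβ0 : β ≠ 0 := by positivity
  have hgeom := (hasSum_geometric_of_lt_one (by positivity) (inv_lt_one_of_one_lt₀ hβ)).mul_left β⁻¹
  rw [← mul_inv, mul_sub, mul_one, mul_inv_cancel₀ hβ0] at hgeom
  have hterm : (fun n : ℕ => 1 / β ^ (n + 1)) = fun n => β⁻¹ * β⁻¹ ^ n := by
    funext n
    rw [one_div, pow_succ', mul_inv, inv_pow]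
  rwa [hterm]

theorem summable_digits (hβ : 1 < β) {ε : ℕ → ℕ} (hε : ∀ n, ε n ≤ 1) :
    Summable (fun n => (ε n : ℝ) / β ^ (n + 1)) :=
  (hasSum_one_div_pow hβ).summable.of_nonneg_of_le (fun n => by positivity)
    (fun n => div_le_div_of_nonneg_right (by exact_mod_cast hε n) (by positivity))

theorem value_nonneg (hβ : 1 < β) (ε : ℕ → ℕ) : 0 ≤ value β ε :=
  tsum_nonneg fun n => by positivity

theorem value_le (hβ : 1 < β) {ε : ℕ → ℕ} (hε : ∀ n, ε n ≤ 1) : value β ε ≤ (β - 1)⁻¹ := by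
  rw [← (hasSum_one_div_pow hβ).tsum_eq]
  exact (summable_digits hβ hε).tsum_le_tsum
    (fun n => div_le_div_of_nonneg_right (by exact_mod_cast hε n) (by positivity))
    (hasSum_one_div_pow hβ).summable

theorem value_const_one (hβ : 1 < β) : value β (fun _ => 1) = (β - 1)⁻¹ := by
  simpa [value] using (hasSum_one_div_pow hβ).tsum_eq

theorem value_compl (hβ : 1 < β) {ε : ℕ → ℕ} (hε : ∀ n, ε n ≤ 1) :
    value β (fun n => 1 - ε n) = (β - 1)⁻¹ - value β ε := by
  rw [← (hasSum_one_div_pow hβ).tsum_eq, value, value,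
    ← (hasSum_one_div_pow hβ).summable.tsum_sub (summable_digits hβ hε)]
  congr 1 with n
  rw [Nat.cast_sub (hε n), sub_div, Nat.cast_one]

theorem value_pos (hβ : 1 < β) {ε : ℕ → ℕ} (hε : ∀ n, ε n ≤ 1) {m : ℕ} (hm : ε m ≠ 0) :
    0 < value β ε :=
  (summable_digits hβ hε).tsum_pos (fun n => by positivity) m
    (div_pos (by exact_mod_cast Nat.pos_of_ne_zero hm) (by positivity))

theorem mul_value (hβ : 1 < β) {ε : ℕ → ℕ} (hε : ∀ n, ε n ≤ 1) :
    β * value β ε = ε 0 + value β (fun k => ε (k + 1)) := by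
  have hβ0 : β ≠ 0 := by positivity
  rw [value, (summable_digits hβ hε).tsum_eq_zero_add, mul_add, value, ← tsum_mul_left]
  congr 1
  · rw [zero_add, pow_one]
    field_simp
  · congr 1 with n
    rw [pow_succ' β (n + 1)]
    field_simp

theorem mul_value_tail (hβ : 1 < β) {ε : ℕ → ℕ} (hε : ∀ n, ε n ≤ 1) (n : ℕ) :
    β * value β (fun k => ε (k + n)) = ε n + value β (fun k => ε (k + (n + 1))) := by
  simpa only [zero_add, add_assoc, add_comm 1 n] using mul_value hβ fun k => hε (k + n)

theorem value_sub_value_of_eqOn (hβ : 1 < β) {x y : ℕ → ℕ} (hx : ∀ n, x n ≤ 1)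
    (hy : ∀ n, y n ≤ 1) {n : ℕ} (h : ∀ k < n, x k = y k) :
    value β x - value β y =
      (value β (fun k => x (k + n)) - value β (fun k => y (k + n))) / β ^ n := by
  induction n with
  | zero => simp
  | succ n ih =>
    have hβ0 : β ≠ 0 := by positivity
    rw [ih fun k hk => h k (by omega), pow_succ, mul_comm (β ^ n), ← div_div]
    congr 1
    rw [eq_div_iff hβ0, sub_mul, mul_comm, mul_value_tail hβ hx, mul_comm,
      mul_value_tail hβ hy, h n n.lt_succ_self]
    ring

noncomputable def greedyDigit (β r : ℝ) : ℕ := if 1 ≤ β * r then 1 else 0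

noncomputable def greedyStep (β r : ℝ) : ℝ := β * r - greedyDigit β r

noncomputable def greedy (β y : ℝ) (n : ℕ) : ℕ := greedyDigit β ((greedyStep β)^[n] y)

theorem greedyDigit_le_one (β r : ℝ) : greedyDigit β r ≤ 1 := by
  unfold greedyDigit
  split_ifs <;> simp

theorem greedy_le_one (β y : ℝ) (n : ℕ) : greedy β y n ≤ 1 :=
  greedyDigit_le_one _ _

theorem greedy_add (β y : ℝ) (m n : ℕ) :
    greedy β y (m + n) = greedy β ((greedyStep β)^[n] y) m := by
  rw [greedy, greedy, Function.iterate_add_apply]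

theorem mul_inv_sub_one (hβ : 1 < β) : β * (β - 1)⁻¹ = (β - 1)⁻¹ + 1 := by
  have : β - 1 ≠ 0 := by linarith
  field_simp
  ring

theorem one_lt_inv_sub_one (hβ : 1 < β) (hβ2 : β < 2) : 1 < (β - 1)⁻¹ :=
  (one_lt_inv₀ (by linarith)).2 (by linarith)

theorem mapsTo_greedyStep_Icc (hβ : 1 < β) (hβ2 : β < 2) :
    MapsTo (greedyStep β) (Icc 0 (β - 1)⁻¹) (Icc 0 (β - 1)⁻¹) := by
  intro r ⟨hr0, hr1⟩
  have := mul_inv_sub_one hβ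
  have := one_lt_inv_sub_one hβ hβ2
  have : β * r ≤ β * (β - 1)⁻¹ := mul_le_mul_of_nonneg_left hr1 (by linarith)
  unfold greedyStep greedyDigit
  split_ifs <;> constructor <;> push_cast <;> nlinarith

theorem mapsTo_greedyStep_Ico (hβ : 1 < β) (hβ2 : β < 2) :
    MapsTo (greedyStep β) (Ico 0 (β - 1)⁻¹) (Ico 0 (β - 1)⁻¹) := by
  intro r ⟨hr0, hr1⟩
  refine ⟨(mapsTo_greedyStep_Icc hβ hβ2 ⟨hr0, hr1.le⟩).1, ?_⟩
  have := mul_inv_sub_one hβ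
  have := one_lt_inv_sub_one hβ hβ2
  have : β * r < β * (β - 1)⁻¹ := mul_lt_mul_of_pos_left hr1 (by linarith)
  unfold greedyStep greedyDigit
  split_ifs <;> push_cast <;> linarith

theorem sub_sum_greedy (hβ : 1 < β) (y : ℝ) (n : ℕ) :
    y - ∑ k ∈ Finset.range n, (greedy β y k : ℝ) / β ^ (k + 1) =
      (greedyStep β)^[n] y / β ^ n := by
  have hβ0 : β ≠ 0 := by positivity
  induction n with
  | zero => simp
  | succ n ih =>
    rw [Finset.sum_range_succ, ← sub_sub, ih, Function.iterate_succ_apply', greedyStep, greedy]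
    field_simp
    ring

theorem value_greedy (hβ : 1 < β) (hβ2 : β < 2) {y : ℝ} (hy : y ∈ Icc 0 (β - 1)⁻¹) :
    value β (greedy β y) = y := by
  have hrem n := (mapsTo_greedyStep_Icc hβ hβ2).iterate n hy
  have hlim : Tendsto (fun n => (greedyStep β)^[n] y / β ^ n) atTop (𝓝 0) :=
    squeeze_zero (fun n => div_nonneg (hrem n).1 (by positivity))
      (fun n => div_le_div_of_nonneg_right (hrem n).2 (by positivity))
      (tendsto_const_nhds.div_atTop (tendsto_pow_atTop_atTop_of_one_lt hβ))
  refine HasSum.tsum_eq ((hasSum_iff_tendsto_nat_of_nonneg (fun n => by positivity) y).2 ?_)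
  have := tendsto_const_nhds (x := y) |>.sub hlim
  rw [sub_zero] at this
  refine this.congr fun n => ?_
  rw [← sub_sum_greedy hβ]
  ring

theorem exists_binary_value_eq (hβ : 1 < β) (hβ2 : β < 2) {y : ℝ} (hy : y ∈ Icc 0 (β - 1)⁻¹) :
    ∃ ε : ℕ → ℕ, (∀ n, ε n ≤ 1) ∧ value β ε = y :=
  ⟨greedy β y, greedy_le_one β y, value_greedy hβ hβ2 hy⟩

theorem exists_greedy_ne_one (hβ : 1 < β) (hβ2 : β < 2) {y : ℝ} (hy : y ∈ Ico 0 (β - 1)⁻¹)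
    (N : ℕ) : ∃ n ≥ N, greedy β y n ≠ 1 := by
  by_contra! h
  have hr := (mapsTo_greedyStep_Ico hβ hβ2).iterate N hy
  have hones : greedy β ((greedyStep β)^[N] y) = fun _ => 1 :=
    funext fun m => by rw [← greedy_add]; exact h _ (by omega)
  have := value_greedy hβ hβ2 (Ico_subset_Icc_self hr)
  rw [hones, value_const_one hβ] at this
  exact hr.2.ne' this

/- The lazy expansion: complement the greedy expansion of `1/(β-1) - y`, whose digits are not
eventually all `1` because its remainders stay below `1/(β-1)`. -/
theorem exists_binary_value_eq_of_pos (hβ : 1 < β) (hβ2 : β < 2) {y : ℝ}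
    (hy : y ∈ Ioc 0 (β - 1)⁻¹) :
    ∃ ε : ℕ → ℕ, (∀ n, ε n ≤ 1) ∧ value β ε = y ∧ ∀ N, ∃ n ≥ N, ε n ≠ 0 := by
  have hz : (β - 1)⁻¹ - y ∈ Ico 0 (β - 1)⁻¹ := ⟨by linarith [hy.2], by linarith [hy.1]⟩
  refine ⟨fun n => 1 - greedy β ((β - 1)⁻¹ - y) n, fun n => Nat.sub_le _ _, ?_, fun N => ?_⟩
  · rw [value_compl hβ (greedy_le_one β _), value_greedy hβ hβ2 (Ico_subset_Icc_self hz)]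
    ring
  · obtain ⟨n, hn, hne⟩ := exists_greedy_ne_one hβ hβ2 hz N
    have := greedy_le_one β ((β - 1)⁻¹ - y) n
    exact ⟨n, hn, by simp only; omega⟩

section Splice

def splice (ε : ℕ → ℕ) (n d : ℕ) (η : ℕ → ℕ) (k : ℕ) : ℕ :=
  if k < n then ε k else if k = n then d else η (k - (n + 1))

variable {ε η : ℕ → ℕ} {n d : ℕ}

theorem splice_of_lt {k : ℕ} (hk : k < n) : splice ε n d η k = ε k := if_pos hk

theorem splice_self : splice ε n d η n = d := by simp [splice]

theorem splice_add_succ (k : ℕ) : splice ε n d η (k + (n + 1)) = η k := by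
  rw [splice, if_neg (by omega), if_neg (by omega), Nat.add_sub_cancel]

theorem splice_le_one (hε : ∀ k, ε k ≤ 1) (hd : d ≤ 1) (hη : ∀ k, η k ≤ 1) (k : ℕ) :
    splice ε n d η k ≤ 1 := by
  unfold splice
  split_ifs
  exacts [hε k, hd, hη _]

theorem exists_splice_ne_zero (hη : ∀ N, ∃ k ≥ N, η k ≠ 0) (N : ℕ) :
    ∃ k ≥ N, splice ε n d η k ≠ 0 := by
  obtain ⟨k, hk, hne⟩ := hη N
  exact ⟨k + (n + 1), by omega, by rwa [splice_add_succ]⟩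

theorem value_splice (hβ : 1 < β) (hε : ∀ k, ε k ≤ 1) (hd : d ≤ 1) (hη : ∀ k, η k ≤ 1)
    (h : d + value β η = β * value β (fun k => ε (k + n))) :
    value β (splice ε n d η) = value β ε := by
  have hs := splice_le_one (n := n) hε hd hη
  have htail : value β (fun k => splice ε n d η (k + n)) = value β (fun k => ε (k + n)) := by
    have := mul_value_tail hβ hs n
    simp only [splice_self, splice_add_succ] at this
    exact mul_left_cancel₀ (by positivity) (this.trans h)
  have := value_sub_value_of_eqOn hβ hs hε fun k hk => splice_of_lt hk
  rwa [htail, sub_self, zero_div, sub_eq_zero] at this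

end Splice

section QuasiGreedy

variable {a : ℕ → ℕ}

theorem value_tail_pos (hβ : 1 < β) (ha : IsQuasiGreedyOne β a) (n : ℕ) :
    0 < value β (fun k => a (k + n)) := by
  obtain ⟨j, hj, hne⟩ := ha.not_fin n
  exact value_pos hβ (fun k => ha.digits _) (m := j - n) (by rwa [Nat.sub_add_cancel hj])

theorem value_tail_le_one (hβ : 1 < β) (hβ2 : β < 2) (ha : IsQuasiGreedyOne β a) (n : ℕ) :
    value β (fun k => a (k + n)) ≤ 1 := by
  induction n with
  | zero => exact ha.sum_one.le
  | succ n ih =>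
    -- otherwise `aₙ = 0`, and `a₀ ⋯ aₙ₋₁ 1` followed by a lazy expansion of the excess would be
    -- an infinite expansion of `1` lexicographically above `a`
    by_contra! hgt
    have hstep := mul_value_tail hβ ha.digits n
    have han : a n = 0 := by
      have : (a n : ℝ) < 1 := by nlinarith
      have : a n < 1 := by exact_mod_cast this
      omega
    rw [han, Nat.cast_zero, zero_add] at hstep
    obtain ⟨δ, hδ, hδval, hδinf⟩ := exists_binary_value_eq_of_pos hβ hβ2
      (y := value β (fun k => a (k + (n + 1))) - 1)
      ⟨by linarith, by linarith [value_le hβ fun k => ha.digits (k + (n + 1))]⟩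
    have hb := value_splice hβ ha.digits le_rfl hδ (by rw [hδval, hstep]; push_cast; ring)
    have hmax := ha.maximal _ (splice_le_one ha.digits le_rfl hδ) (hb.trans ha.sum_one)
      (exists_splice_ne_zero hδinf)
    refine (lexLe_iff_toLex_le.1 hmax).not_gt (lexLt_iff_toLex_lt.1 ⟨n, ?_, ?_⟩)
    · exact fun k hk => (splice_of_lt hk).symm
    · rw [splice_self, han]
      exact one_pos

theorem one_le_value_of_lexLe (hβ : 1 < β) (hβ2 : β < 2) (ha : IsQuasiGreedyOne β a)
    {η : ℕ → ℕ} (hη : ∀ k, η k ≤ 1) (h : LexLe a η) : 1 ≤ value β η := by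
  have ha1 : value β a = 1 := ha.sum_one
  obtain ⟨k, hpre, hlt⟩ | rfl := h
  · have hηk : η k = 1 := by have := hη k; omega
    have hak : a k = 0 := by omega
    have h1 := mul_value_tail hβ hη k
    have h2 := mul_value_tail hβ ha.digits k
    rw [hηk, Nat.cast_one] at h1
    rw [hak, Nat.cast_zero, zero_add] at h2
    have hle : value β (fun j => a (j + k)) ≤ value β (fun j => η (j + k)) := by
      refine le_of_mul_le_mul_left ?_ (by positivity : 0 < β)
      linarith [value_tail_le_one hβ hβ2 ha (k + 1), value_nonneg hβ fun j => η (j + (k + 1))]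
    have := value_sub_value_of_eqOn hβ hη ha.digits fun j hj => (hpre j hj).symm
    have : 0 ≤ value β η - value β a := this ▸ div_nonneg (sub_nonneg.2 hle) (by positivity)
    linarith
  · exact ha1.ge

theorem lexLt_of_value_lt_one (hβ : 1 < β) (hβ2 : β < 2) (ha : IsQuasiGreedyOne β a)
    {η : ℕ → ℕ} (hη : ∀ k, η k ≤ 1) (h : value β η < 1) : LexLt η a :=
  lexLt_iff_toLex_lt.2 <| lt_of_not_ge fun hle =>
    (one_le_value_of_lexLe hβ hβ2 ha hη (lexLe_iff_toLex_le.2 hle)).not_gt h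

theorem exists_pow_mul_lt_of_lexLt (hβ : 1 < β) (ha : IsQuasiGreedyOne β a) {x : ℕ → ℕ}
    (hx : ∀ k, x k ≤ 1) (h : LexLt x a) :
    ∃ k, β ^ (k + 1) * (value β x - 1) < value β (fun j => x (j + (k + 1))) - 1 := by
  obtain ⟨k, hpre, hlt⟩ := h
  have hak : a k = 1 := by have := ha.digits k; omega
  have hxk : x k = 0 := by omega
  have ha1 : value β a = 1 := ha.sum_one
  have hdiff := value_sub_value_of_eqOn hβ hx ha.digits hpre
  rw [ha1] at hdiff
  have h1 := mul_value_tail hβ hx k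
  have h2 := mul_value_tail hβ ha.digits k
  rw [hxk, Nat.cast_zero, zero_add] at h1
  rw [hak, Nat.cast_one] at h2
  refine ⟨k, ?_⟩
  calc β ^ (k + 1) * (value β x - 1)
      = β * value β (fun j => x (j + k)) - β * value β (fun j => a (j + k)) := by
        rw [hdiff]
        field_simp
        ring
    _ < value β (fun j => x (j + (k + 1))) - 1 := by
        linarith [value_tail_pos hβ ha (k + 1)]

theorem lt_zero_of_forall_exists_mul_lt {c : ℝ} (hc : 1 < c) {f : ℕ → ℝ}
    (hf : BddAbove (range f)) (h : ∀ m, 0 ≤ f m → ∃ m', c * f m < f m') (m : ℕ) : f m < 0 := by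
  by_contra! hm
  obtain ⟨m₁, hm₁⟩ := h m hm
  have hpos : 0 < f m₁ := by nlinarith
  have hgrow : ∀ i, ∃ m', c ^ i * f m₁ ≤ f m' := by
    intro i
    induction i with
    | zero => exact ⟨m₁, by simp⟩
    | succ i ih =>
      obtain ⟨m', hm'⟩ := ih
      obtain ⟨m'', hm''⟩ := h m' (le_trans (by positivity) hm')
      refine ⟨m'', ?_⟩
      rw [pow_succ', mul_assoc]
      nlinarith
  obtain ⟨M, hM⟩ := hf
  obtain ⟨i, hi⟩ := pow_unbounded_of_one_lt (M / f m₁) hc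
  obtain ⟨m', hm'⟩ := hgrow i
  rw [div_lt_iff₀ hpos] at hi
  linarith [hM (mem_range_self m')]

theorem value_tail_lt_one_of_forall_lexLt (hβ : 1 < β) (ha : IsQuasiGreedyOne β a)
    {δ : ℕ → ℕ} (hδ : ∀ k, δ k ≤ 1) (h : ∀ m, LexLt (fun k => δ (k + m)) a) (n : ℕ) :
    value β (fun k => δ (k + n)) < 1 := by
  suffices value β (fun k => δ (k + n)) - 1 < 0 by linarith
  refine lt_zero_of_forall_exists_mul_lt hβ (f := fun m => value β (fun k => δ (k + m)) - 1)
    ⟨(β - 1)⁻¹, ?_⟩ (fun m hm => ?_) n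
  · rintro _ ⟨m, rfl⟩
    linarith [value_le hβ fun k => hδ (k + m), value_nonneg hβ fun k => δ (k + m)]
  · obtain ⟨k, hk⟩ := exists_pow_mul_lt_of_lexLt hβ ha (fun j => hδ (j + m)) (h m)
    refine ⟨k + 1 + m, lt_of_le_of_lt ?_ (hk.trans_eq ?_)⟩
    · exact mul_le_mul_of_nonneg_right (le_self_pow₀ hβ.le (by omega)) hm
    · simp only [add_assoc]

end QuasiGreedy

section Uniqueness

variable {ε : ℕ → ℕ}

theorem digit_eq_of_isUniqueExpansion (hβ : 1 < β) (hβ2 : β < 2) (hu : IsUniqueExpansion β ε)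
    (hε : ∀ k, ε k ≤ 1) {n d : ℕ} (hd : d ≤ 1)
    (hy : β * value β (fun k => ε (k + n)) - d ∈ Icc 0 (β - 1)⁻¹) : ε n = d := by
  obtain ⟨η, hη, hηval⟩ := exists_binary_value_eq hβ hβ2 hy
  have hsplice := hu _ (splice_le_one hε hd hη) (value_splice hβ hε hd hη (by rw [hηval]; ring))
  rw [← hsplice, splice_self]

theorem value_tail_mem_of_isUniqueExpansion (hβ : 1 < β) (hβ2 : β < 2)
    (hu : IsUniqueExpansion β ε) (hε : ∀ k, ε k ≤ 1)
    (h₀ : value β ε ∈ Ioo ((β - 1)⁻¹ - 1) 1) (n : ℕ) :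
    value β (fun k => ε (k + n)) ∈ Ioo ((β - 1)⁻¹ - 1) 1 := by
  induction n with
  | zero => exact h₀
  | succ n ih =>
    obtain ⟨ihl, ihr⟩ := ih
    have hstep := mul_value_tail hβ hε n
    have hle := value_le hβ fun k => hε (k + (n + 1))
    have hnn := value_nonneg hβ fun k => ε (k + (n + 1))
    have hB := one_lt_inv_sub_one hβ hβ2
    rcases Nat.le_one_iff_eq_zero_or_eq_one.1 (hε n) with h | h
    · rw [h, Nat.cast_zero, zero_add] at hstep
      refine ⟨by nlinarith, lt_of_not_ge fun hge => ?_⟩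
      have := digit_eq_of_isUniqueExpansion hβ hβ2 hu hε le_rfl (n := n)
        ⟨by push_cast; linarith, by push_cast; linarith⟩
      omega
    · rw [h, Nat.cast_one] at hstep
      refine ⟨lt_of_not_ge fun hge => ?_, by nlinarith⟩
      have := digit_eq_of_isUniqueExpansion hβ hβ2 hu hε zero_le_one (n := n)
        ⟨by push_cast; linarith, by push_cast; linarith⟩
      omega

theorem value_tail_succ_eq_one_add (hβ : 1 < β) {x y : ℕ → ℕ} (hx : ∀ k, x k ≤ 1)
    (hy : ∀ k, y k ≤ 1) (hxy : value β x = value β y) {n : ℕ} (hpre : ∀ k < n, x k = y k)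
    (hxn : x n = 0) (hyn : y n = 1) :
    value β (fun k => x (k + (n + 1))) = 1 + value β (fun k => y (k + (n + 1))) := by
  have htail : value β (fun k => x (k + n)) = value β (fun k => y (k + n)) := by
    have := value_sub_value_of_eqOn hβ hx hy hpre
    rw [hxy, sub_self, eq_comm, div_eq_zero_iff, sub_eq_zero] at this
    exact this.resolve_right (by positivity)
  have h1 := mul_value_tail hβ hx n
  have h2 := mul_value_tail hβ hy n
  rw [hxn, Nat.cast_zero, zero_add] at h1
  rw [hyn, Nat.cast_one] at h2
  rw [← h1, ← h2, htail]

theorem isUniqueExpansion_of_value_tail_mem (hβ : 1 < β) (hε : ∀ k, ε k ≤ 1)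
    (h : ∀ n, value β (fun k => ε (k + n)) ∈ Ioo ((β - 1)⁻¹ - 1) 1) :
    IsUniqueExpansion β ε := by
  intro ε' hε' hval
  by_contra hne
  rcases lt_or_gt_of_ne (show toLex ε' ≠ toLex ε from hne) with hlt | hlt
  · obtain ⟨n, hpre, hn⟩ := lexLt_iff_toLex_lt.2 hlt
    have := hε n
    have := value_tail_succ_eq_one_add hβ hε' hε hval hpre (by omega) (by omega)
    linarith [value_le hβ fun k => hε' (k + (n + 1)), (h (n + 1)).1]
  · obtain ⟨n, hpre, hn⟩ := lexLt_iff_toLex_lt.2 hlt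
    have := hε' n
    have := value_tail_succ_eq_one_add hβ hε hε' hval.symm hpre (by omega) (by omega)
    linarith [value_nonneg hβ fun k => ε' (k + (n + 1)), (h (n + 1)).2]

end Uniqueness

end BetaExpansion

open BetaExpansion in
/-- for `β ∈ (1,2)` with quasi-greedy expansion `a` of `1`, a binary sequence
`ε` is the unique `β`-representation of its value `x ∈ ((2-β)/(β-1), 1)` iff every shift
`σⁿ ε` lies lexicographically strictly between the complemented sequence `ā` and `a`. -/
theorem unique_representation_iff_between_shifts
    (β : ℝ) (hβ : β ∈ Set.Ioo (1 : ℝ) 2) (a : ℕ → ℕ) (ha : IsQuasiGreedyOne β a)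
    (ε : ℕ → ℕ) (hε : ∀ n, ε n ≤ 1)
    (x : ℝ) (hxval : x = ∑' n : ℕ, (ε n : ℝ) / β ^ (n + 1))
    (hx : x ∈ Set.Ioo ((2 - β) / (β - 1)) 1) :
    (∀ ε' : ℕ → ℕ, (∀ n, ε' n ≤ 1) → x = ∑' n : ℕ, (ε' n : ℝ) / β ^ (n + 1) → ε' = ε) ↔
    (∀ n : ℕ, LexLt (fun k => 1 - a k) (fun k => ε (k + n)) ∧
      LexLt (fun k => ε (k + n)) a) := by
  obtain ⟨hβ1, hβ2⟩ := hβ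
  have hc : (2 - β) / (β - 1) = (β - 1)⁻¹ - 1 := by
    field_simp [sub_ne_zero.2 hβ1.ne']
    ring
  have hcompl n : value β (fun k => 1 - ε (k + n)) < 1 ↔
      (β - 1)⁻¹ - 1 < value β (fun k => ε (k + n)) := by
    rw [value_compl hβ1 fun k => hε (k + n)]
    constructor <;> intro <;> linarith
  rw [hc] at hx
  subst hxval
  constructor
  · intro hu n
    have hmem := value_tail_mem_of_isUniqueExpansion hβ1 hβ2 (fun ε' h₁ h₂ => hu ε' h₁ h₂.symm)
      hε hx n
    exact ⟨lexLt_compl (fun k => hε (k + n)) ha.digits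
        (lexLt_of_value_lt_one hβ1 hβ2 ha (fun _ => Nat.sub_le _ _) ((hcompl n).2 hmem.1)),
      lexLt_of_value_lt_one hβ1 hβ2 ha (fun k => hε (k + n)) hmem.2⟩
  · intro H ε' hε' hval
    refine isUniqueExpansion_of_value_tail_mem hβ1 hε (fun n => ⟨(hcompl n).1 ?_, ?_⟩) ε' hε'
      hval.symm
    · exact value_tail_lt_one_of_forall_lexLt hβ1 ha (fun _ => Nat.sub_le _ _)
        (fun m => lexLt_compl (y := fun k => ε (k + m)) ha.digits (fun k => hε _) (H m).1) n
    · exact value_tail_lt_one_of_forall_lexLt hβ1 ha hε (fun m => (H m).2) n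
end

section
/- Every sequence ε ∈ {0,1}^ℕ satisfying the condition that for all n ≥ 0 neither σ^n ε ⪰ a nor σ^n ε ⪯ ā holds (where a is the quasi-greedy expansion of 1 in base β) is simultaneously the greedy and the lazy β-expansion of the number π_β(ε) = Σ ε_n β^{-n}. -/
/-!
If every tail of `ε` lies strictly between `ā` and `a`, every tail value lies in
`((β - 1)⁻¹ - 1, 1)`: the upper bound holds for any sequence all of whose tails are below `a`
(compare with `a` at the first difference and iterate), and the lower bound is its mirror image
under `x ↦ x̄`. If `ε' ≠ ε` had the same value, at their first difference `n` the tails after `n`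
would satisfy `π(σⁿ⁺¹ x) = 1 + π(σⁿ⁺¹ y)` for the smaller sequence `x`, which these bounds forbid.
-/

namespace BetaExpansion

open Finset Filter Topology

noncomputable def piBeta (β : ℝ) (x : ℕ → ℕ) : ℝ := ∑' n : ℕ, (x n : ℝ) / β ^ (n + 1)

def shift (x : ℕ → ℕ) (n : ℕ) : ℕ → ℕ := fun k => x (k + n)

def complement (x : ℕ → ℕ) : ℕ → ℕ := fun k => 1 - x k

variable {β : ℝ} {x y : ℕ → ℕ}

lemma shift_shift (x : ℕ → ℕ) (m n : ℕ) : shift (shift x m) n = shift x (n + m) := by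
  funext k
  simp only [shift, add_assoc]

lemma shift_complement (x : ℕ → ℕ) (n : ℕ) : shift (complement x) n = complement (shift x n) :=
  rfl

lemma complement_le_one (x : ℕ → ℕ) (n : ℕ) : complement x n ≤ 1 :=
  Nat.sub_le 1 (x n)

lemma complement_complement (hx : ∀ n, x n ≤ 1) : complement (complement x) = x := by
  funext n
  have := hx n
  simp only [complement]
  omega

lemma lexLt_trichotomy (x y : ℕ → ℕ) : LexLt x y ∨ x = y ∨ LexLt y x := by
  classical
  by_cases hxy : x = y
  · exact Or.inr (Or.inl hxy)
  have hex : ∃ n, x n ≠ y n := Function.ne_iff.mp hxy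
  have hagree : ∀ k < Nat.find hex, x k = y k := fun k hk => not_not.mp (Nat.find_min hex hk)
  rcases (Nat.find_spec hex).lt_or_gt with hlt | hgt
  · exact Or.inl ⟨_, hagree, hlt⟩
  · exact Or.inr (Or.inr ⟨_, fun k hk => (hagree k hk).symm, hgt⟩)

lemma lexLt_of_not_lexLe (h : ¬ LexLe x y) : LexLt y x := by
  rcases lexLt_trichotomy x y with hlt | heq | hgt
  · exact absurd (Or.inl hlt) h
  · exact absurd (Or.inr heq) h
  · exact hgt

lemma lexLt_complement (hx : ∀ n, x n ≤ 1) (hy : ∀ n, y n ≤ 1) (h : LexLt x y) :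
    LexLt (complement y) (complement x) := by
  obtain ⟨n, hagree, hlt⟩ := h
  refine ⟨n, fun k hk => by simp only [BetaExpansion.complement, hagree k hk], ?_⟩
  have := hx n
  have := hy n
  simp only [BetaExpansion.complement]
  omega

lemma piBeta_nonneg (hβ : 0 ≤ β) (x : ℕ → ℕ) : 0 ≤ piBeta β x :=
  tsum_nonneg fun _ => by positivity

lemma summable_inv_pow_succ (hβ : 1 < β) : Summable fun n : ℕ => (β ^ (n + 1))⁻¹ := by
  have hgeom := summable_geometric_of_lt_one (inv_nonneg.2 (zero_le_one.trans hβ.le))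
    (inv_lt_one_of_one_lt₀ hβ)
  simpa only [inv_pow] using (summable_nat_add_iff 1).2 hgeom

lemma summable_piBeta (hβ : 1 < β) (hx : ∀ n, x n ≤ 1) :
    Summable fun n : ℕ => (x n : ℝ) / β ^ (n + 1) := by
  refine (summable_inv_pow_succ hβ).of_nonneg_of_le (fun _ => by positivity) fun n => ?_
  rw [div_eq_mul_inv]
  exact mul_le_of_le_one_left (by positivity) (by exact_mod_cast hx n)

lemma piBeta_const_one (hβ : 1 < β) : piBeta β (fun _ => 1) = (β - 1)⁻¹ := by
  have hβ0 : 0 < β := zero_lt_one.trans hβ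
  have hgeom := tsum_geometric_of_lt_one (inv_nonneg.2 hβ0.le) (inv_lt_one_of_one_lt₀ hβ)
  calc piBeta β (fun _ => 1) = β⁻¹ * ∑' n : ℕ, β⁻¹ ^ n := by
        rw [← tsum_mul_left]
        simp only [piBeta, Nat.cast_one, pow_succ, inv_pow, one_div, mul_inv, mul_comm]
    _ = (β - 1)⁻¹ := by
        rw [hgeom]
        field_simp

lemma piBeta_le (hβ : 1 < β) (hx : ∀ n, x n ≤ 1) : piBeta β x ≤ (β - 1)⁻¹ := by
  rw [← piBeta_const_one hβ]
  refine (summable_piBeta hβ hx).tsum_le_tsum (fun n => ?_)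
    (summable_piBeta hβ fun _ => le_rfl)
  gcongr
  exact_mod_cast hx n

lemma piBeta_complement (hβ : 1 < β) (hx : ∀ n, x n ≤ 1) :
    piBeta β (complement x) = (β - 1)⁻¹ - piBeta β x := by
  rw [eq_sub_iff_add_eq, ← piBeta_const_one hβ, piBeta, piBeta, piBeta,
    ← (summable_piBeta hβ (complement_le_one x)).tsum_add (summable_piBeta hβ hx)]
  refine tsum_congr fun n => ?_
  have := hx n
  rw [← add_div]
  congr 1
  norm_cast
  simp only [complement]
  omega

lemma piBeta_pos (hβ : 1 < β) (hx : ∀ n, x n ≤ 1) (h : ∃ n, x n ≠ 0) : 0 < piBeta β x := by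
  obtain ⟨n, hn⟩ := h
  exact (summable_piBeta hβ hx).tsum_pos (fun _ => by positivity) n
    (div_pos (by exact_mod_cast Nat.pos_of_ne_zero hn) (by positivity))

lemma piBeta_eq_sum_add_shift (hβ : 1 < β) (hx : ∀ n, x n ≤ 1) (N : ℕ) :
    piBeta β x = ∑ k ∈ range N, (x k : ℝ) / β ^ (k + 1) + piBeta β (shift x N) / β ^ N := by
  rw [piBeta, ← (summable_piBeta hβ hx).sum_add_tsum_nat_add N, piBeta, div_eq_mul_inv,
    ← tsum_mul_right]
  congr 1
  refine tsum_congr fun k => ?_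
  simp only [shift, pow_add]
  field_simp

/-- `n` is the first index at which `x` and `y` differ. -/
lemma piBeta_sub_piBeta_of_lexLt (hβ : 1 < β) (hx : ∀ n, x n ≤ 1) (hy : ∀ n, y n ≤ 1)
    (h : LexLt x y) :
    ∃ n, piBeta β y - piBeta β x =
      (1 + piBeta β (shift y (n + 1)) - piBeta β (shift x (n + 1))) / β ^ (n + 1) := by
  obtain ⟨n, hagree, hlt⟩ := h
  have hxn : x n = 0 := by have := hy n; omega
  have hyn : y n = 1 := by have := hy n; omega
  have hprefix :
      ∑ k ∈ range n, (x k : ℝ) / β ^ (k + 1) = ∑ k ∈ range n, (y k : ℝ) / β ^ (k + 1) :=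
    sum_congr rfl fun k hk => by rw [hagree k (mem_range.mp hk)]
  refine ⟨n, ?_⟩
  rw [piBeta_eq_sum_add_shift hβ hx (n + 1), piBeta_eq_sum_add_shift hβ hy (n + 1),
    sum_range_succ, sum_range_succ, hprefix, hxn, hyn]
  push_cast
  ring

lemma piBeta_lt_piBeta_of_lexLt_of_shift_lt_one (hβ : 1 < β) (hx : ∀ n, x n ≤ 1)
    (hy : ∀ n, y n ≤ 1) (h : LexLt x y) (hx_shift : ∀ n, piBeta β (shift x n) < 1) :
    piBeta β x < piBeta β y := by
  obtain ⟨n, hdiff⟩ := piBeta_sub_piBeta_of_lexLt hβ hx hy h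
  have hnum : 0 < 1 + piBeta β (shift y (n + 1)) - piBeta β (shift x (n + 1)) := by
    linarith [hx_shift (n + 1), piBeta_nonneg (zero_le_one.trans hβ.le) (shift y (n + 1))]
  have : 0 < piBeta β y - piBeta β x := hdiff ▸ div_pos hnum (by positivity)
  linarith

lemma piBeta_lt_piBeta_of_lexLt_of_lt_shift (hβ : 1 < β) (hx : ∀ n, x n ≤ 1)
    (hy : ∀ n, y n ≤ 1) (h : LexLt x y) (hy_shift : ∀ n, (β - 1)⁻¹ - 1 < piBeta β (shift y n)) :
    piBeta β x < piBeta β y := by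
  have hcompl := piBeta_lt_piBeta_of_lexLt_of_shift_lt_one hβ (complement_le_one y)
    (complement_le_one x) (lexLt_complement hx hy h) fun n => by
      rw [shift_complement, piBeta_complement hβ (x := shift y n) fun k => hy (k + n)]
      linarith [hy_shift n]
  rw [piBeta_complement hβ hx, piBeta_complement hβ hy] at hcompl
  linarith

lemma piBeta_le_one_add_of_forall_shift_lexLt (hβ : 1 < β) {a : ℕ → ℕ}
    (ha : IsQuasiGreedyOne β a) (k : ℕ) (hx : ∀ n, x n ≤ 1)
    (hxa : ∀ m, LexLt (shift x m) a) : piBeta β x ≤ 1 + (β - 1)⁻¹ * β⁻¹ ^ k := by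
  induction k generalizing x with
  | zero => rw [pow_zero, mul_one]; linarith [piBeta_le hβ hx]
  | succ k ih =>
    obtain ⟨n, hdiff⟩ := piBeta_sub_piBeta_of_lexLt hβ hx ha.digits (hxa 0)
    have htail := ih (x := shift x (n + 1)) (fun j => hx (j + (n + 1))) fun m => by
      rw [shift_shift]
      exact hxa _
    have hβ0 : 0 < β := zero_lt_one.trans hβ
    have hpow : β ≤ β ^ (n + 1) := le_self_pow₀ hβ.le n.succ_ne_zero
    have hbound : 0 ≤ (β - 1)⁻¹ * β⁻¹ ^ k := by
      have : 0 < β - 1 := sub_pos.2 hβ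
      positivity
    rw [show piBeta β a = 1 from ha.sum_one] at hdiff
    calc piBeta β x
        = 1 - (1 + piBeta β (shift a (n + 1)) - piBeta β (shift x (n + 1))) / β ^ (n + 1) := by
          linarith
      _ ≤ 1 - (1 - piBeta β (shift x (n + 1))) / β ^ (n + 1) := by
          gcongr
          linarith [piBeta_nonneg hβ0.le (shift a (n + 1))]
      _ = 1 + (piBeta β (shift x (n + 1)) - 1) / β ^ (n + 1) := by ring
      _ ≤ 1 + (β - 1)⁻¹ * β⁻¹ ^ k / β ^ (n + 1) := by gcongr; linarith
      _ ≤ 1 + (β - 1)⁻¹ * β⁻¹ ^ k / β := by gcongr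
      _ = 1 + (β - 1)⁻¹ * β⁻¹ ^ (k + 1) := by rw [pow_succ]; ring

lemma piBeta_le_one_of_forall_shift_lexLt (hβ : 1 < β) {a : ℕ → ℕ}
    (ha : IsQuasiGreedyOne β a) (hx : ∀ n, x n ≤ 1)
    (hxa : ∀ m, LexLt (shift x m) a) : piBeta β x ≤ 1 := by
  have hlim : Tendsto (fun k : ℕ => 1 + (β - 1)⁻¹ * β⁻¹ ^ k) atTop (𝓝 1) := by
    simpa using (tendsto_pow_atTop_nhds_zero_of_lt_one
      (inv_nonneg.2 (zero_le_one.trans hβ.le)) (inv_lt_one_of_one_lt₀ hβ)).const_mul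
      (β - 1)⁻¹ |>.const_add 1
  exact ge_of_tendsto' hlim fun k => piBeta_le_one_add_of_forall_shift_lexLt hβ ha k hx hxa

/-- Strictness comes from `a` not ending in `0^∞`, so that its tail after the first
difference with `x` has positive value. -/
lemma piBeta_lt_one_of_forall_shift_lexLt (hβ : 1 < β) {a : ℕ → ℕ}
    (ha : IsQuasiGreedyOne β a) (hx : ∀ n, x n ≤ 1)
    (hxa : ∀ m, LexLt (shift x m) a) : piBeta β x < 1 := by
  obtain ⟨n, hdiff⟩ := piBeta_sub_piBeta_of_lexLt hβ hx ha.digits (hxa 0)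
  rw [show piBeta β a = 1 from ha.sum_one] at hdiff
  have htail_x : piBeta β (shift x (n + 1)) ≤ 1 :=
    piBeta_le_one_of_forall_shift_lexLt hβ ha (fun j => hx (j + (n + 1))) fun m => by
      rw [shift_shift]
      exact hxa _
  have htail_a : 0 < piBeta β (shift a (n + 1)) := by
    refine piBeta_pos hβ (fun j => ha.digits (j + (n + 1))) ?_
    obtain ⟨m, hm, hne⟩ := ha.not_fin (n + 1)
    exact ⟨m - (n + 1), by simpa only [shift, Nat.sub_add_cancel hm] using hne⟩
  have : 0 < 1 - piBeta β x :=
    hdiff ▸ div_pos (by linarith) (pow_pos (zero_lt_one.trans hβ) _)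
  linarith

lemma lt_piBeta_of_forall_complement_lexLt_shift (hβ : 1 < β) {a : ℕ → ℕ}
    (ha : IsQuasiGreedyOne β a) (hx : ∀ n, x n ≤ 1)
    (hxa : ∀ m, LexLt (complement a) (shift x m)) : (β - 1)⁻¹ - 1 < piBeta β x := by
  have hcompl := piBeta_lt_one_of_forall_shift_lexLt hβ ha (complement_le_one x) fun m => by
    rw [← complement_complement ha.digits, shift_complement]
    exact lexLt_complement (complement_le_one a) (fun k => hx _) (hxa m)
  rw [piBeta_complement hβ hx] at hcompl
  linarith

end BetaExpansion

open BetaExpansion in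
/-- every binary sequence `ε` such that for all `n` neither `σⁿ ε ⪰ a` nor
`σⁿ ε ⪯ ā` holds is simultaneously the greedy (lexicographically maximal) and the lazy
(lexicographically minimal) `β`-expansion of `π_β(ε) = Σ ε_n β^{-n}`. -/
theorem strictly_between_implies_greedy_and_lazy
    (β : ℝ) (hβ : β ∈ Set.Ioo (1 : ℝ) 2) (a : ℕ → ℕ) (ha : IsQuasiGreedyOne β a)
    (ε : ℕ → ℕ) (hε : ∀ n, ε n ≤ 1)
    (hbetween : ∀ n : ℕ, ¬ LexLe a (fun k => ε (k + n)) ∧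
      ¬ LexLe (fun k => ε (k + n)) (fun k => 1 - a k)) :
    ∀ ε' : ℕ → ℕ, (∀ n, ε' n ≤ 1) →
      (∑' n : ℕ, (ε' n : ℝ) / β ^ (n + 1)) = (∑' n : ℕ, (ε n : ℝ) / β ^ (n + 1)) →
      LexLe ε' ε ∧ LexLe ε ε' := by
  intro ε' hε' hsum
  have hβ1 := hβ.1
  have hshift_lt_one : ∀ n, piBeta β (shift ε n) < 1 := fun n =>
    piBeta_lt_one_of_forall_shift_lexLt hβ1 ha (fun k => hε (k + n)) fun m => by
      rw [shift_shift]
      exact lexLt_of_not_lexLe (hbetween (m + n)).1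
  have hlt_shift : ∀ n, (β - 1)⁻¹ - 1 < piBeta β (shift ε n) := fun n =>
    lt_piBeta_of_forall_complement_lexLt_shift hβ1 ha (fun k => hε (k + n)) fun m => by
      rw [shift_shift]
      exact lexLt_of_not_lexLe (hbetween (m + n)).2
  rcases lexLt_trichotomy ε' ε with hlt | rfl | hgt
  · exact absurd hsum (piBeta_lt_piBeta_of_lexLt_of_lt_shift hβ1 hε' hε hlt hlt_shift).ne
  · exact ⟨Or.inr rfl, Or.inr rfl⟩
  · exact absurd hsum
      (piBeta_lt_piBeta_of_lexLt_of_shift_lt_one hβ1 hε hε' hgt hshift_lt_one).ne'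
end
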